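/- arXiv:1102.5585 — 4 statements merged into one kernel-verified Lean document; each statement's English description precedes it below -/
import Mathlib

section
/- Let N be a two-level PT-net system with transition set T = L ∪ H, and let N' be any high-level net system whose set of transitions H' does not intersect L and whose set of places is disjoint from that of N. Then, taking Σ_o = L as the set of observable transitions in all three systems, N\H is weakly simulated by (N|N')\(H\H'), which in turn is weakly simulated by N. -/
/-! Relate a marking of `N | N'` to a marking of `N` when they agree on the places of `N`.
Every transition of `N \ H` is low, hence not in `N'`, so it fires in the composition with the
same effect on the places of `N` and survives the restriction: this is even a strong simulation.
Conversely, a step of the composition is either a step of `N` with the same label, or a step of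
`N'` alone, which is unobservable and leaves the places of `N` untouched. -/

/-! ## Labelled transition systems -/

structure LTS (Q : Type _) (A : Type _) where
  init : Q
  tr : Q → A → Q → Prop

namespace LTS

variable {Q Q' A : Type _}

/-- One unobservable step. -/
def TauStep (S : LTS Q A) (Obs : Set A) (q q' : Q) : Prop :=
  ∃ τ, τ ∉ Obs ∧ S.tr q τ q'

/-- `q →* q'` : reflexive-transitive closure of unobservable steps. -/
def TauStar (S : LTS Q A) (Obs : Set A) : Q → Q → Prop :=
  Relation.ReflTransGen (S.TauStep Obs)

/-- Weak steps producing a word of observable labels. -/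
inductive WeakSteps (S : LTS Q A) (Obs : Set A) : Q → List A → Q → Prop
  | nil (q : Q) : WeakSteps S Obs q [] q
  | tau {q q' q'' : Q} {w : List A} {τ : A} :
      τ ∉ Obs → S.tr q τ q' → WeakSteps S Obs q' w q'' → WeakSteps S Obs q w q''
  | obs {q q' q'' : Q} {w : List A} {σ : A} :
      σ ∈ Obs → S.tr q σ q' → WeakSteps S Obs q' w q'' → WeakSteps S Obs q (σ :: w) q''

/-- The language of a partially observed LTS. -/
def lang (S : LTS Q A) (Obs : Set A) : Set (List A) :=
  { w | ∃ q, S.WeakSteps Obs S.init w q }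

end LTS

/-- `R` is a weak simulation of `S` by `S'`. -/
def IsWeakSimulation {Q Q' A : Type _} (Obs : Set A) (S : LTS Q A) (S' : LTS Q' A)
    (R : Q → Q' → Prop) : Prop :=
  R S.init S'.init ∧
  ∀ q1 q1', R q1 q1' →
    (∀ σ ∈ Obs, ∀ q2, S.tr q1 σ q2 →
      ∃ q1'' q2'' q2', S'.TauStar Obs q1' q1'' ∧ S'.tr q1'' σ q2'' ∧
        S'.TauStar Obs q2'' q2' ∧ R q2 q2') ∧
    (∀ τ ∉ Obs, ∀ q2, S.tr q1 τ q2 →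
      ∃ q2', S'.TauStar Obs q1' q2' ∧ R q2 q2')

/-- `S` is weakly simulated by `S'`. -/
def WeaklySimulated {Q Q' A : Type _} (Obs : Set A) (S : LTS Q A) (S' : LTS Q' A) : Prop :=
  ∃ R, IsWeakSimulation Obs S S' R

/-- `R` is a weak bisimulation between `S` and `S'`. -/
def IsWeakBisimulation {Q Q' A : Type _} (Obs : Set A) (S : LTS Q A) (S' : LTS Q' A)
    (R : Q → Q' → Prop) : Prop :=
  IsWeakSimulation Obs S S' R ∧ IsWeakSimulation Obs S' S (fun q' q => R q q')

/-- `S` and `S'` are weakly bisimilar. -/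
def WeaklyBisimilar {Q Q' A : Type _} (Obs : Set A) (S : LTS Q A) (S' : LTS Q' A) : Prop :=
  ∃ R, IsWeakBisimulation Obs S S' R

/-! ## Place/Transition Petri nets -/

/-- A PT-net over a universe `P` of places and `Tr` of transitions:
a finite set of places, a finite set of transitions, and input/output flows.
Flows of non-transitions vanish. -/
structure PTNet (P : Type _) (Tr : Type _) where
  places : Finset P
  transitions : Finset Tr
  pre : Tr → P → ℕ
  post : Tr → P → ℕ
  pre_eq_zero : ∀ t ∉ transitions, ∀ p, pre t p = 0
  post_eq_zero : ∀ t ∉ transitions, ∀ p, post t p = 0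

namespace PTNet

variable {P Tr : Type _} [DecidableEq P] [DecidableEq Tr]

/-- `M[t⟩` : transition `t` is enabled at marking `M`. -/
def Enabled (N : PTNet P Tr) (M : P → ℕ) (t : Tr) : Prop :=
  t ∈ N.transitions ∧ ∀ p ∈ N.places, N.pre t p ≤ M p

/-- The marking obtained by firing `t` at `M`. -/
def fire (N : PTNet P Tr) (M : P → ℕ) (t : Tr) : P → ℕ :=
  fun p => if p ∈ N.places then M p + N.post t p - N.pre t p else M p

/-- `M[t⟩M'`. -/
def Fires (N : PTNet P Tr) (M : P → ℕ) (t : Tr) (M' : P → ℕ) : Prop :=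
  N.Enabled M t ∧ M' = N.fire M t

/-- `M[s⟩M'` for a sequence `s` of transitions. -/
def FiresSeq (N : PTNet P Tr) : (P → ℕ) → List Tr → (P → ℕ) → Prop
  | M, [], M' => M' = M
  | M, t :: s, M' => ∃ M'', N.Fires M t M'' ∧ N.FiresSeq M'' s M'

/-- `M'` is reachable from `M`. -/
def Reachable (N : PTNet P Tr) (M M' : P → ℕ) : Prop :=
  ∃ s, N.FiresSeq M s M'

/-- The restriction `N \ T'` of a net: the transitions in `T'` are removed. -/
def restrict (N : PTNet P Tr) (T' : Finset Tr) : PTNet P Tr where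
  places := N.places
  transitions := N.transitions \ T'
  pre := fun t p => if t ∈ N.transitions \ T' then N.pre t p else 0
  post := fun t p => if t ∈ N.transitions \ T' then N.post t p else 0
  pre_eq_zero := by intro t ht p; simp [ht]
  post_eq_zero := by intro t ht p; simp [ht]

/-- The composition `N1 | N2` of two nets (intended for disjoint place sets);
shared transitions synchronize. -/
def comp (N1 N2 : PTNet P Tr) : PTNet P Tr where
  places := N1.places ∪ N2.places
  transitions := N1.transitions ∪ N2.transitions
  pre := fun t p => if p ∈ N1.places then N1.pre t p else N2.pre t p
  post := fun t p => if p ∈ N1.places then N1.post t p else N2.post t p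
  pre_eq_zero := by
    intro t ht p
    simp only [Finset.mem_union, not_or] at ht
    by_cases hp : p ∈ N1.places <;>
      simp [hp, N1.pre_eq_zero t ht.1, N2.pre_eq_zero t ht.2]
  post_eq_zero := by
    intro t ht p
    simp only [Finset.mem_union, not_or] at ht
    by_cases hp : p ∈ N1.places <;>
      simp [hp, N1.post_eq_zero t ht.1, N2.post_eq_zero t ht.2]

/-- The union of two initial markings (agrees with `M1` on the places of `N1`,
with `M2` elsewhere). -/
def combine (N1 : PTNet P Tr) (M1 M2 : P → ℕ) : P → ℕ :=
  fun p => if p ∈ N1.places then M1 p else M2 p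

/-- The reachability graph of a marked net, as an LTS on markings. -/
def toLTS (N : PTNet P Tr) (M0 : P → ℕ) : LTS (P → ℕ) Tr where
  init := M0
  tr := fun M t M' => N.Fires M t M'

/-- The language of the net system `(N, M0)` whose observable transitions are
those in `L` (labelled by themselves): projections of firing sequences onto `L*`. -/
def lang (N : PTNet P Tr) (M0 : P → ℕ) (L : Finset Tr) : Set (List Tr) :=
  { w | ∃ s M, N.FiresSeq M0 s M ∧ s.filter (· ∈ L) = w }

/-- The free language of the net system `(N, M0)`: all of its firing sequences. -/
def freeLang (N : PTNet P Tr) (M0 : P → ℕ) : Set (List Tr) :=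
  { s | ∃ M, N.FiresSeq M0 s M }

/-- The net with given places and transitions and empty flow. -/
def ofSets (Pl : Finset P) (Ts : Finset Tr) : PTNet P Tr where
  places := Pl
  transitions := Ts
  pre := fun _ _ => 0
  post := fun _ _ => 0
  pre_eq_zero := fun _ _ _ => rfl
  post_eq_zero := fun _ _ _ => rfl

end PTNet

/-! ## Non-interference properties -/

section Security

variable {P Tr : Type _} [DecidableEq P] [DecidableEq Tr]

/-- Non-Deducibility on Compositions: for every high-level net system `N'`
(with any initial marking `M0'`) whose places are disjoint from those of `N` and
whose transitions avoid `L`, the systems `N \ H` and `(N | N') \ (H \ H')` are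
language equivalent, the observable transitions being those in `L`. -/
def NDC (N : PTNet P Tr) (M0 : P → ℕ) (L H : Finset Tr) : Prop :=
  ∀ (N' : PTNet P Tr) (M0' : P → ℕ),
    Disjoint N.places N'.places → Disjoint N'.transitions L →
    (N.restrict H).lang M0 L =
      ((N.comp N').restrict (H \ N'.transitions)).lang (N.combine M0 M0') L

/-- Bisimulation-based Non-Deducibility on Compositions: as `NDC`, but with
weak bisimilarity in place of language equivalence. -/
def BNDC (N : PTNet P Tr) (M0 : P → ℕ) (L H : Finset Tr) : Prop :=
  ∀ (N' : PTNet P Tr) (M0' : P → ℕ),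
    Disjoint N.places N'.places → Disjoint N'.transitions L →
    WeaklyBisimilar (L : Set Tr) ((N.restrict H).toLTS M0)
      (((N.comp N').restrict (H \ N'.transitions)).toLTS (N.combine M0 M0'))

/-- Strong BNDC: whenever a reachable marking `M1` enables a high transition `h`
with `M1[h⟩M2`, the systems `(N \ H, M1)` and `(N \ H, M2)` are weakly bisimilar. -/
def SBNDC (N : PTNet P Tr) (M0 : P → ℕ) (L H : Finset Tr) : Prop :=
  ∀ M1 h M2, N.Reachable M0 M1 → h ∈ H → N.Fires M1 h M2 →
    WeaklyBisimilar (L : Set Tr) ((N.restrict H).toLTS M1) ((N.restrict H).toLTS M2)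

/-- The least relation generated from `M0 R M0` by:
(i) if `M1 R M2` and `M2[h⟩M2'` with `h ∈ H` then `M1 R M2'`;
(ii) if `M1 R M2`, `M1[l⟩M1'` (in `N \ H`) and `M2[l⟩M2'` with `l ∈ L`
then `M1' R M2'`. -/
inductive RRel (N : PTNet P Tr) (M0 : P → ℕ) (L H : Finset Tr) : (P → ℕ) → (P → ℕ) → Prop
  | base : RRel N M0 L H M0 M0
  | high {M1 M2 M2' : P → ℕ} {h : Tr} : h ∈ H → RRel N M0 L H M1 M2 →
      N.Fires M2 h M2' → RRel N M0 L H M1 M2'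
  | low {M1 M2 M1' M2' : P → ℕ} {l : Tr} : l ∈ L → RRel N M0 L H M1 M2 →
      (N.restrict H).Fires M1 l M1' → N.Fires M2 l M2' → RRel N M0 L H M1' M2'

/-- The property `P(h,l)`: for all `w ∈ (L ∪ H)*` and `s ∈ L*`, if `M0[w⟩M1`,
`M1[h⟩M2`, `M1[s⟩M3` and `M2[s⟩M4`, then `M3[l⟩` iff `M4[l⟩`. -/
def PropP (N : PTNet P Tr) (M0 : P → ℕ) (L H : Finset Tr) (h l : Tr) : Prop :=
  ∀ (w s : List Tr) (M1 M2 M3 M4 : P → ℕ),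
    (∀ t ∈ w, t ∈ L ∪ H) → (∀ t ∈ s, t ∈ L) →
    N.FiresSeq M0 w M1 → N.Fires M1 h M2 →
    N.FiresSeq M1 s M3 → N.FiresSeq M2 s M4 →
    (N.Enabled M3 l ↔ N.Enabled M4 l)

/-- Intransitive Non-Interference for a three-level net system:
`(N \ D, M)` has NDC (w.r.t. low `L`, high `H`) for `M = M0` and for every
marking `M` with `M0[υd⟩M` in `N`, `d ∈ D`. -/
def INI (N : PTNet P Tr) (M0 : P → ℕ) (L D H : Finset Tr) : Prop :=
  NDC (N.restrict D) M0 L H ∧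
  ∀ (υ : List Tr) (d : Tr) (M : P → ℕ), d ∈ D → N.FiresSeq M0 (υ ++ [d]) M →
    NDC (N.restrict D) M L H

/-- Bisimulation-based Intransitive Non-Interference: as `INI` with `BNDC`. -/
def BINI (N : PTNet P Tr) (M0 : P → ℕ) (L D H : Finset Tr) : Prop :=
  BNDC (N.restrict D) M0 L H ∧
  ∀ (υ : List Tr) (d : Tr) (M : P → ℕ), d ∈ D → N.FiresSeq M0 (υ ++ [d]) M →
    BNDC (N.restrict D) M L H

/-- The property `Q(h,l)`: for all `χ ∈ T*` and `s ∈ L*`, if `M0[χ⟩M1`,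
`M1[h⟩M2`, `M1[s⟩M3` and `M2[s⟩M4`, then `M3[l⟩` iff `M4[l⟩`. -/
def PropQ (N : PTNet P Tr) (M0 : P → ℕ) (L : Finset Tr) (h l : Tr) : Prop :=
  ∀ (χ s : List Tr) (M1 M2 M3 M4 : P → ℕ),
    (∀ t ∈ χ, t ∈ N.transitions) → (∀ t ∈ s, t ∈ L) →
    N.FiresSeq M0 χ M1 → N.Fires M1 h M2 →
    N.FiresSeq M1 s M3 → N.FiresSeq M2 s M4 →
    (N.Enabled M3 l ↔ N.Enabled M4 l)

end Security

namespace IsWeakSimulation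

variable {Q Q' A : Type*} {Obs : Set A} {S : LTS Q A} {S' : LTS Q' A} {R : Q → Q' → Prop}

theorem of_step_or_stutter (hinit : R S.init S'.init)
    (hstep : ∀ q1 q1' a q2, R q1 q1' → S.tr q1 a q2 →
      (∃ q2', S'.tr q1' a q2' ∧ R q2 q2') ∨ (a ∉ Obs ∧ R q2 q1')) :
    IsWeakSimulation Obs S S' R := by
  refine ⟨hinit, fun q1 q1' hR => ⟨fun σ hσ q2 hq => ?_, fun τ hτ q2 hq => ?_⟩⟩
  · rcases hstep q1 q1' σ q2 hR hq with ⟨q2', hq', hR'⟩ | ⟨hσ', -⟩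
    · exact ⟨q1', q2', q2', .refl, hq', .refl, hR'⟩
    · exact absurd hσ hσ'
  · rcases hstep q1 q1' τ q2 hR hq with ⟨q2', hq', hR'⟩ | ⟨-, hR'⟩
    · exact ⟨q2', .single ⟨τ, hτ, hq'⟩, hR'⟩
    · exact ⟨q1', .refl, hR'⟩

end IsWeakSimulation

namespace PTNet

section Places

variable {P Tr : Type*} [DecidableEq P] {N : PTNet P Tr} {M M' : P → ℕ} {t : Tr}

theorem eqOn_fire (hM : Set.EqOn M M' N.places) :
    Set.EqOn (N.fire M t) (N.fire M' t) N.places := by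
  intro p hp
  simp only [fire, if_pos (Finset.mem_coe.mp hp), hM hp]

theorem eqOn_combine : Set.EqOn (N.combine M M') M N.places := by
  intro p hp
  simp [combine, Finset.mem_coe.mp hp]

variable [DecidableEq Tr] {N' : PTNet P Tr} {Mc Mc' : P → ℕ}

theorem eqOn_comp_fire : Set.EqOn ((N.comp N').fire M t) (N.fire M t) N.places := by
  intro p hp
  simp [fire, comp, Finset.mem_coe.mp hp]

theorem Fires.comp_of_not_mem_right (hF : N.Fires M t M') (ht : t ∉ N'.transitions)
    (hM : Set.EqOn M Mc N.places) :
    ∃ Mc', (N.comp N').Fires Mc t Mc' ∧ Set.EqOn M' Mc' N.places := by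
  obtain ⟨⟨htN, hpre⟩, rfl⟩ := hF
  refine ⟨_, ⟨⟨Finset.mem_union_left _ htN, fun p _ => ?_⟩, rfl⟩,
    (eqOn_fire hM).trans eqOn_comp_fire.symm⟩
  by_cases hp : p ∈ N.places
  · simpa [comp, hp, hM hp] using hpre p hp
  · simp [comp, hp, N'.pre_eq_zero t ht]

theorem Fires.of_comp_of_mem (hF : (N.comp N').Fires Mc t Mc') (ht : t ∈ N.transitions)
    (hM : Set.EqOn Mc M N.places) :
    ∃ M', N.Fires M t M' ∧ Set.EqOn Mc' M' N.places := by
  obtain ⟨⟨-, hpre⟩, rfl⟩ := hF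
  refine ⟨_, ⟨⟨ht, fun p hp => ?_⟩, rfl⟩, eqOn_comp_fire.trans (eqOn_fire hM)⟩
  simpa [comp, hp, hM hp] using hpre p (Finset.mem_union_left _ hp)

theorem Fires.eqOn_of_comp_of_not_mem (hF : (N.comp N').Fires Mc t Mc')
    (ht : t ∉ N.transitions) : Set.EqOn Mc' Mc N.places := by
  obtain ⟨-, rfl⟩ := hF
  intro p hp
  rw [eqOn_comp_fire hp]
  simp [fire, Finset.mem_coe.mp hp, N.pre_eq_zero t ht, N.post_eq_zero t ht]

end Places

variable {P Tr : Type*} [DecidableEq P] [DecidableEq Tr]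

theorem fires_restrict_iff {N : PTNet P Tr} {T' : Finset Tr} {M M' : P → ℕ} {t : Tr} :
    (N.restrict T').Fires M t M' ↔ t ∉ T' ∧ N.Fires M t M' := by
  suffices key : t ∈ N.transitions \ T' → ((N.restrict T').Fires M t M' ↔ N.Fires M t M') by
    constructor
    · intro hF
      exact ⟨(Finset.mem_sdiff.mp hF.1.1).2, (key hF.1.1).1 hF⟩
    · rintro ⟨htT', hF⟩
      exact (key (Finset.mem_sdiff.mpr ⟨hF.1.1, htT'⟩)).2 hF
  intro ht
  obtain ⟨htN, htT'⟩ := Finset.mem_sdiff.mp ht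
  have hfire : (N.restrict T').fire M t = N.fire M t := by
    funext p
    simp [fire, restrict, htN, htT']
  rw [Fires, Fires, hfire]
  simp [Enabled, restrict, htN, htT']

theorem weaklySimulated_restrict_comp (N N' : PTNet P Tr) (M0 M0' : P → ℕ) (Obs : Set Tr)
    (H : Finset Tr) (hN' : Disjoint (N.transitions \ H) N'.transitions) :
    WeaklySimulated Obs ((N.restrict H).toLTS M0)
      (((N.comp N').restrict (H \ N'.transitions)).toLTS (N.combine M0 M0')) := by
  refine ⟨fun M Mc => Set.EqOn M Mc N.places,
    .of_step_or_stutter eqOn_combine.symm fun M Mc t M2 hR hF => .inl ?_⟩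
  obtain ⟨htH, hF⟩ := fires_restrict_iff.mp hF
  have htN' : t ∉ N'.transitions :=
    Finset.disjoint_left.mp hN' (Finset.mem_sdiff.mpr ⟨hF.1.1, htH⟩)
  obtain ⟨Mc2, hFc, hR2⟩ := hF.comp_of_not_mem_right htN' hR
  exact ⟨Mc2, fires_restrict_iff.mpr ⟨fun ht => htH (Finset.mem_sdiff.mp ht).1, hFc⟩, hR2⟩

theorem weaklySimulated_comp_restrict (N N' : PTNet P Tr) (M0 M0' : P → ℕ) (L T' : Finset Tr)
    (hN' : Disjoint N'.transitions L) :
    WeaklySimulated (L : Set Tr) (((N.comp N').restrict T').toLTS (N.combine M0 M0'))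
      (N.toLTS M0) := by
  refine ⟨fun Mc M => Set.EqOn Mc M N.places,
    .of_step_or_stutter eqOn_combine fun Mc M t Mc2 hR hF => ?_⟩
  obtain ⟨-, hF⟩ := fires_restrict_iff.mp hF
  by_cases htN : t ∈ N.transitions
  · exact .inl (hF.of_comp_of_mem htN hR)
  · have htN' : t ∈ N'.transitions := (Finset.mem_union.mp hF.1.1).resolve_left htN
    exact .inr ⟨Finset.disjoint_left.mp hN' htN', (hF.eqOn_of_comp_of_not_mem htN).trans hR⟩

end PTNet

theorem weaklySimulated_chain_general
    {P Tr : Type _} [DecidableEq P] [DecidableEq Tr]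
    (N : PTNet P Tr) (M0 : P → ℕ) (L H : Finset Tr)
    (hT : N.transitions = L ∪ H)
    (N' : PTNet P Tr) (M0' : P → ℕ)
    (hH' : Disjoint N'.transitions L) :
    WeaklySimulated (L : Set Tr) ((N.restrict H).toLTS M0)
      (((N.comp N').restrict (H \ N'.transitions)).toLTS (N.combine M0 M0')) ∧
    WeaklySimulated (L : Set Tr)
      (((N.comp N').restrict (H \ N'.transitions)).toLTS (N.combine M0 M0'))
      (N.toLTS M0) := by
  have hlow : N.transitions \ H ⊆ L :=
    sdiff_le_iff.mpr (hT.trans (Finset.union_comm L H)).subset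
  exact ⟨PTNet.weaklySimulated_restrict_comp N N' M0 M0' _ H
      (Finset.disjoint_of_subset_left hlow hH'.symm),
    PTNet.weaklySimulated_comp_restrict N N' M0 M0' L _ hH'⟩

/-- `N \ H` is weakly simulated by `(N | N') \ (H \ H')`, which in
turn is weakly simulated by `N`, with observable transitions `Σ_o = L`. -/
theorem weaklySimulated_chain
    {P Tr : Type _} [DecidableEq P] [DecidableEq Tr]
    (N : PTNet P Tr) (M0 : P → ℕ) (L H : Finset Tr)
    (hT : N.transitions = L ∪ H) (hLH : Disjoint L H)
    (N' : PTNet P Tr) (M0' : P → ℕ)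
    (hP : Disjoint N.places N'.places) (hH' : Disjoint N'.transitions L) :
    WeaklySimulated (L : Set Tr) ((N.restrict H).toLTS M0)
      (((N.comp N').restrict (H \ N'.transitions)).toLTS (N.combine M0 M0')) ∧
    WeaklySimulated (L : Set Tr)
      (((N.comp N').restrict (H \ N'.transitions)).toLTS (N.combine M0 M0'))
      (N.toLTS M0) :=
  weaklySimulated_chain_general N M0 L H hT N' M0' hH'
end

section
/- Let N be a two-level PT-net system with transition set T = L ∪ H, and let N' be any high-level net system whose set of transitions H' does not intersect L and whose set of places is disjoint from that of N. Then the chain of language inclusions L(N\H) ⊆ L((N|N')\(H\H')) ⊆ L(N) holds, where in each system the observable transitions are exactly those in L. Moreover both bounds are attained: the lower bound when N' has no place and H' = ∅, and the upper bound when N' has no place and H' = H. -/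
/-! A firing sequence of `N \ H` uses only low transitions, which have no arcs to the places
of `N'`, so it also fires in the composition from the union of the markings. Conversely, the
transitions of `(N | N') \ (H \ H')` outside `N` have no arcs to the places of `N`, so deleting
them from a firing sequence leaves a firing sequence of `N` with the same low projection. The two
placeless nets turn the composition into `N \ H` and into `N` respectively. -/

namespace PTNet

open Set

variable {P Tr : Type _} {N N' : PTNet P Tr} {M M' Mn Mn' Mc Mc' : P → ℕ} {t : Tr} {s : List Tr}

theorem enabled_congr (h : EqOn M M' N.places) : N.Enabled M t ↔ N.Enabled M' t := by
  refine and_congr_right fun _ => forall₂_congr fun p hp => ?_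
  rw [h (Finset.mem_coe.mpr hp)]

theorem enabled_restrict_iff [DecidableEq Tr] (T' : Finset Tr) :
    (N.restrict T').Enabled M t ↔ N.Enabled M t ∧ t ∉ T' := by
  by_cases htN : t ∈ N.transitions <;> by_cases htT : t ∈ T' <;>
    simp [Enabled, restrict, htN, htT]

variable [DecidableEq P]

theorem fire_of_notMem_transitions (ht : t ∉ N.transitions) : N.fire M t = M := by
  funext p
  simp [fire, N.pre_eq_zero t ht, N.post_eq_zero t ht]

theorem fire_eqOn (h : EqOn M M' N.places) : EqOn (N.fire M t) (N.fire M' t) N.places :=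
  fun p hp => by simp [fire, Finset.mem_coe.mp hp, h hp]

theorem combine_eqOn (M0 M0' : P → ℕ) : EqOn (N.combine M0 M0') M0 N.places :=
  fun _ hp => if_pos hp

theorem FiresSeq.mem_transitions (h : N.FiresSeq M s M') : ∀ t ∈ s, t ∈ N.transitions := by
  induction s generalizing M with
  | nil => simp
  | cons t s ih =>
    obtain ⟨_, ⟨hen, rfl⟩, hs⟩ := h
    simpa using ⟨hen.1, ih hs⟩

variable [DecidableEq Tr]

theorem fire_restrict (T' : Finset Tr) (ht : t ∈ N.transitions \ T') :
    (N.restrict T').fire M t = N.fire M t := by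
  obtain ⟨htN, htT⟩ := Finset.mem_sdiff.mp ht
  funext p
  simp [fire, restrict, htN, htT]

theorem firesSeq_restrict_iff (T' : Finset Tr) :
    (N.restrict T').FiresSeq M s M' ↔ N.FiresSeq M s M' ∧ ∀ t ∈ s, t ∉ T' := by
  induction s generalizing M with
  | nil => simp [FiresSeq]
  | cons t s ih =>
    simp only [FiresSeq, Fires, enabled_restrict_iff, List.mem_cons, forall_eq_or_imp]
    constructor
    · rintro ⟨_, ⟨⟨hen, htT⟩, rfl⟩, hs⟩
      rw [fire_restrict T' (Finset.mem_sdiff.mpr ⟨hen.1, htT⟩), ih] at hs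
      exact ⟨⟨_, ⟨hen, rfl⟩, hs.1⟩, htT, hs.2⟩
    · rintro ⟨⟨_, ⟨hen, rfl⟩, hs⟩, htT, hsT⟩
      refine ⟨_, ⟨⟨hen, htT⟩, rfl⟩, ?_⟩
      rw [fire_restrict T' (Finset.mem_sdiff.mpr ⟨hen.1, htT⟩), ih]
      exact ⟨hs, hsT⟩

theorem comp_fire_eqOn : EqOn ((N.comp N').fire M t) (N.fire M t) N.places :=
  fun p hp => by simp [fire, comp, Finset.mem_coe.mp hp]

theorem Enabled.of_comp (h : (N.comp N').Enabled M t) (ht : t ∈ N.transitions) :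
    N.Enabled M t :=
  ⟨ht, fun p hp => by simpa [comp, hp] using h.2 p (Finset.mem_union_left _ hp)⟩

theorem Enabled.comp (h : N.Enabled M t) (hpre : N'.pre t = 0) : (N.comp N').Enabled M t := by
  refine ⟨Finset.mem_union_left _ h.1, fun p _ => ?_⟩
  by_cases hp : p ∈ N.places
  · simpa [PTNet.comp, hp] using h.2 p hp
  · simp [PTNet.comp, hp, hpre]

theorem FiresSeq.filter_of_comp (h : (N.comp N').FiresSeq Mc s Mc')
    (hM : EqOn Mn Mc N.places) :
    ∃ Mn', N.FiresSeq Mn (s.filter (· ∈ N.transitions)) Mn' ∧ EqOn Mn' Mc' N.places := by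
  induction s generalizing Mc Mn with
  | nil => exact ⟨Mn, rfl, h ▸ hM⟩
  | cons t s ih =>
    obtain ⟨_, ⟨hen, rfl⟩, hs⟩ := h
    by_cases ht : t ∈ N.transitions
    · obtain ⟨Mn', hs', hMn'⟩ := ih hs ((fire_eqOn hM).trans comp_fire_eqOn.symm)
      rw [List.filter_cons_of_pos (by simpa using ht)]
      exact ⟨Mn', ⟨_, ⟨(enabled_congr hM).2 (hen.of_comp ht), rfl⟩, hs'⟩, hMn'⟩
    · have hfire : EqOn (N.fire Mc t) ((N.comp N').fire Mc t) N.places :=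
        comp_fire_eqOn.symm
      rw [fire_of_notMem_transitions ht] at hfire
      rw [List.filter_cons_of_neg (by simpa using ht)]
      exact ih hs (hM.trans hfire)

theorem FiresSeq.comp (h : N.FiresSeq Mn s Mn') (hpre : ∀ t ∈ s, N'.pre t = 0)
    (hM : EqOn Mc Mn N.places) :
    ∃ Mc', (N.comp N').FiresSeq Mc s Mc' ∧ EqOn Mc' Mn' N.places := by
  induction s generalizing Mc Mn with
  | nil => exact ⟨Mc, rfl, h ▸ hM⟩
  | cons t s ih =>
    obtain ⟨_, ⟨hen, rfl⟩, hs⟩ := h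
    obtain ⟨Mc', hs', hMc'⟩ := ih hs (fun t ht => hpre t (List.mem_cons_of_mem _ ht))
      (comp_fire_eqOn.trans (fire_eqOn hM))
    exact ⟨Mc', ⟨_, ⟨((enabled_congr hM).2 hen).comp (hpre t List.mem_cons_self), rfl⟩, hs'⟩,
      hMc'⟩

theorem lang_restrict_subset (M0 : P → ℕ) (L T' : Finset Tr) :
    (N.restrict T').lang M0 L ⊆ N.lang M0 L := by
  rintro w ⟨s, M, hs, rfl⟩
  exact ⟨s, M, ((firesSeq_restrict_iff T').mp hs).1, rfl⟩

theorem lang_restrict_empty (M0 : P → ℕ) (L : Finset Tr) :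
    (N.restrict ∅).lang M0 L = N.lang M0 L := by
  simp [lang, firesSeq_restrict_iff]

theorem lang_comp_restrict_subset (M0 M0' : P → ℕ) {L : Finset Tr} (T' : Finset Tr)
    (hL : L ⊆ N.transitions) :
    ((N.comp N').restrict T').lang (N.combine M0 M0') L ⊆ (N.restrict T').lang M0 L := by
  rintro w ⟨s, M, hs, rfl⟩
  rw [firesSeq_restrict_iff] at hs
  obtain ⟨Mn, hsn, -⟩ := hs.1.filter_of_comp (combine_eqOn M0 M0').symm
  refine ⟨_, Mn, (firesSeq_restrict_iff T').mpr
    ⟨hsn, fun t ht => hs.2 t (List.mem_of_mem_filter ht)⟩, ?_⟩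
  rw [List.filter_filter]
  exact List.filter_congr fun t _ => by simpa using fun h : t ∈ L => hL h

theorem lang_restrict_subset_lang_comp_restrict (M0 M0' : P → ℕ) (L : Finset Tr)
    {T T' : Finset Tr} (hT : T' ⊆ T) (hpre : ∀ t ∈ N.transitions, t ∉ T → N'.pre t = 0) :
    (N.restrict T).lang M0 L ⊆ ((N.comp N').restrict T').lang (N.combine M0 M0') L := by
  rintro w ⟨s, M, hs, rfl⟩
  rw [firesSeq_restrict_iff] at hs
  obtain ⟨Mc, hsc, -⟩ := hs.1.comp (fun t ht => hpre t (hs.1.mem_transitions t ht) (hs.2 t ht))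
    (combine_eqOn M0 M0')
  exact ⟨s, Mc, (firesSeq_restrict_iff T').mpr ⟨hsc, fun t ht h => hs.2 t ht (hT h)⟩, rfl⟩

end PTNet

theorem lang_chain_and_bounds_general
    {P Tr : Type _} [DecidableEq P] [DecidableEq Tr]
    (N : PTNet P Tr) (M0 : P → ℕ) (L H : Finset Tr)
    (hT : N.transitions = L ∪ H) :
    (∀ (N' : PTNet P Tr) (M0' : P → ℕ),
        Disjoint N.places N'.places → Disjoint N'.transitions L →
        (N.restrict H).lang M0 L ⊆
            ((N.comp N').restrict (H \ N'.transitions)).lang (N.combine M0 M0') L ∧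
        ((N.comp N').restrict (H \ N'.transitions)).lang (N.combine M0 M0') L ⊆
            N.lang M0 L) ∧
    (∀ M0' : P → ℕ,
        ((N.comp (PTNet.ofSets (∅ : Finset P) (∅ : Finset Tr))).restrict
            (H \ (PTNet.ofSets (∅ : Finset P) (∅ : Finset Tr)).transitions)).lang
          (N.combine M0 M0') L = (N.restrict H).lang M0 L) ∧
    (∀ M0' : P → ℕ,
        ((N.comp (PTNet.ofSets (∅ : Finset P) H)).restrict
            (H \ (PTNet.ofSets (∅ : Finset P) H).transitions)).lang
          (N.combine M0 M0') L = N.lang M0 L) := by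
  have hL : L ⊆ N.transitions := hT ▸ Finset.subset_union_left
  have lower : ∀ (N' : PTNet P Tr) (M0' : P → ℕ), Disjoint N'.transitions L →
      (N.restrict H).lang M0 L ⊆
        ((N.comp N').restrict (H \ N'.transitions)).lang (N.combine M0 M0') L := by
    refine fun N' M0' hN'L => PTNet.lang_restrict_subset_lang_comp_restrict M0 M0' L
      Finset.sdiff_subset fun t ht htH => funext (N'.pre_eq_zero t fun htN' => ?_)
    rw [hT] at ht
    exact Finset.disjoint_left.mp hN'L htN' ((Finset.mem_union.mp ht).resolve_right htH)
  have upper : ∀ (N' : PTNet P Tr) (M0' : P → ℕ),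
      ((N.comp N').restrict (H \ N'.transitions)).lang (N.combine M0 M0') L ⊆ N.lang M0 L :=
    fun N' M0' => (PTNet.lang_comp_restrict_subset M0 M0' _ hL).trans
      (PTNet.lang_restrict_subset M0 L _)
  refine ⟨fun N' M0' _ hN'L => ⟨lower N' M0' hN'L, upper N' M0'⟩, fun M0' => ?_, fun M0' => ?_⟩
  · refine subset_antisymm ?_ (lower _ M0' (Finset.disjoint_empty_left L))
    simpa [PTNet.ofSets] using PTNet.lang_comp_restrict_subset M0 M0' (H \ ∅) hL
  · refine subset_antisymm (upper _ M0') ?_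
    rw [← PTNet.lang_restrict_empty]
    simpa [PTNet.ofSets] using PTNet.lang_restrict_subset_lang_comp_restrict
      (N' := PTNet.ofSets ∅ H) M0 M0' L (Finset.empty_subset ∅) fun _ _ _ => rfl

/-- the chain of language inclusions
`L(N\H) ⊆ L((N|N')\(H\H')) ⊆ L(N)` holds, and both bounds are attained:
the lower bound by the placeless net with `H' = ∅`, the upper bound by the
placeless net with `H' = H`. -/
theorem lang_chain_and_bounds
    {P Tr : Type _} [DecidableEq P] [DecidableEq Tr]
    (N : PTNet P Tr) (M0 : P → ℕ) (L H : Finset Tr)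
    (hT : N.transitions = L ∪ H) (hLH : Disjoint L H) :
    (∀ (N' : PTNet P Tr) (M0' : P → ℕ),
        Disjoint N.places N'.places → Disjoint N'.transitions L →
        (N.restrict H).lang M0 L ⊆
            ((N.comp N').restrict (H \ N'.transitions)).lang (N.combine M0 M0') L ∧
        ((N.comp N').restrict (H \ N'.transitions)).lang (N.combine M0 M0') L ⊆
            N.lang M0 L) ∧
    (∀ M0' : P → ℕ,
        ((N.comp (PTNet.ofSets (∅ : Finset P) (∅ : Finset Tr))).restrict
            (H \ (PTNet.ofSets (∅ : Finset P) (∅ : Finset Tr)).transitions)).lang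
          (N.combine M0 M0') L = (N.restrict H).lang M0 L) ∧
    (∀ M0' : P → ℕ,
        ((N.comp (PTNet.ofSets (∅ : Finset P) H)).restrict
            (H \ (PTNet.ofSets (∅ : Finset P) H).transitions)).lang
          (N.combine M0 M0') L = N.lang M0 L) :=
  lang_chain_and_bounds_general N M0 L H hT
end

section
/- If a two-level PT-net system N with transition set T = L ∪ H has the property BNDC, then N and N\H are weakly bisimilar. -/
/-! Composing `N` with the placeless net whose transitions are `H`, and then restricting by
`H \ H = ∅`, gives back `N`. For this one environment BNDC therefore says `N \ H ≈ N`. -/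

theorem WeaklyBisimilar.symm {Q Q' A : Type _} {Obs : Set A} {S : LTS Q A} {S' : LTS Q' A}
    (h : WeaklyBisimilar Obs S S') : WeaklyBisimilar Obs S' S :=
  let ⟨R, hR, hR'⟩ := h
  ⟨fun q' q => R q q', hR', hR⟩

namespace PTNet

variable {P Tr : Type _}

theorem toLTS_congr [DecidableEq P] [DecidableEq Tr] {N₁ N₂ : PTNet P Tr}
    (hpl : N₁.places = N₂.places) (htr : N₁.transitions = N₂.transitions)
    (hpre : ∀ t, ∀ p ∈ N₁.places, N₁.pre t p = N₂.pre t p)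
    (hpost : ∀ t, ∀ p ∈ N₁.places, N₁.post t p = N₂.post t p) (M0 : P → ℕ) :
    N₁.toLTS M0 = N₂.toLTS M0 := by
  have henabled : N₁.Enabled = N₂.Enabled := by
    funext M t
    simp only [Enabled, ← hpl, ← htr]
    exact propext <| and_congr_right fun _ => forall₂_congr fun p hp => by rw [hpre t p hp]
  have hfire : N₁.fire = N₂.fire := by
    funext M t p
    simp only [fire, ← hpl]
    split_ifs with hp
    · rw [hpre t p hp, hpost t p hp]
    · rfl
  simp only [toLTS, Fires, henabled, hfire]

theorem restrict_empty [DecidableEq Tr] (N : PTNet P Tr) : N.restrict ∅ = N := by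
  obtain ⟨places, transitions, pre, post, pre_eq_zero, post_eq_zero⟩ := N
  simp only [restrict, Finset.sdiff_empty, mk.injEq, true_and]
  constructor <;> funext t p <;> split_ifs with ht
  exacts [rfl, (pre_eq_zero t ht p).symm, rfl, (post_eq_zero t ht p).symm]

theorem toLTS_comp_ofSets_empty [DecidableEq P] [DecidableEq Tr] (N : PTNet P Tr)
    {Ts : Finset Tr} (hTs : Ts ⊆ N.transitions) (M0 : P → ℕ) :
    (N.comp (ofSets ∅ Ts)).toLTS M0 = N.toLTS M0 :=
  toLTS_congr (Finset.union_empty _) (Finset.union_eq_left.2 hTs)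
    (fun _ _ hp => if_pos (by simpa [comp, ofSets] using hp))
    (fun _ _ hp => if_pos (by simpa [comp, ofSets] using hp)) M0

theorem combine_self [DecidableEq P] (N : PTNet P Tr) (M : P → ℕ) : N.combine M M = M :=
  funext fun _ => ite_self _

end PTNet

/-- if a two-level net system has BNDC, then `N` and `N \ H` are
weakly bisimilar. -/
theorem weaklyBisimilar_of_bndc
    {P Tr : Type _} [DecidableEq P] [DecidableEq Tr]
    (N : PTNet P Tr) (M0 : P → ℕ) (L H : Finset Tr)
    (hT : N.transitions = L ∪ H) (hLH : Disjoint L H)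
    (hBNDC : BNDC N M0 L H) :
    WeaklyBisimilar (L : Set Tr) (N.toLTS M0) ((N.restrict H).toLTS M0) := by
  have hH : H ⊆ N.transitions := hT ▸ Finset.subset_union_right
  have h := hBNDC (PTNet.ofSets ∅ H) M0 (Finset.disjoint_empty_right _) hLH.symm
  rw [show H \ (PTNet.ofSets ∅ H).transitions = ∅ from Finset.sdiff_self H,
    PTNet.restrict_empty, PTNet.combine_self, N.toLTS_comp_ofSets_empty hH] at h
  exact h.symm
end

section
/- A two-level PT-net system N = (N₀,M0) with T = L ∪ H has the property SBNDC if and only if for every reachable marking M1 of N and every high-level transition h ∈ H, M1[h⟩M2 entails L(N₀\H, M1) = L(N₀\H, M2). -/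
/-! A weak simulation carries weak traces along, so weak bisimilarity implies equality of
observable languages. Conversely, in `N \ H` every transition is observable and firing is
deterministic, so "same set of firing sequences" is itself a (strong) bisimulation. -/

section WeakSimulation

variable {Q Q' A : Type*} {Obs : Set A} {S : LTS Q A} {S' : LTS Q' A}

theorem LTS.TauStar.trans_weakSteps {q q' q'' : Q} {w : List A}
    (h : S.TauStar Obs q q') (hw : S.WeakSteps Obs q' w q'') : S.WeakSteps Obs q w q'' := by
  induction h using Relation.ReflTransGen.head_induction_on with
  | refl => exact hw
  | head hstep _ ih =>
    obtain ⟨τ, hτ, htr⟩ := hstep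
    exact .tau hτ htr ih

theorem IsWeakSimulation.exists_weakSteps {R : Q → Q' → Prop}
    (hR : IsWeakSimulation Obs S S' R) {q r : Q} {q' : Q'} {w : List A}
    (hq : R q q') (hw : S.WeakSteps Obs q w r) : ∃ r', S'.WeakSteps Obs q' w r' := by
  induction hw generalizing q' with
  | nil => exact ⟨q', .nil q'⟩
  | tau hτ htr _ ih =>
    obtain ⟨p', hp', hRp⟩ := (hR.2 _ _ hq).2 _ hτ _ htr
    obtain ⟨r', hr'⟩ := ih hRp
    exact ⟨r', hp'.trans_weakSteps hr'⟩
  | obs hσ htr _ ih =>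
    obtain ⟨a, b, p', hqa, hab, hbp, hRp⟩ := (hR.2 _ _ hq).1 _ hσ _ htr
    obtain ⟨r', hr'⟩ := ih hRp
    exact ⟨r', hqa.trans_weakSteps (.obs hσ hab (hbp.trans_weakSteps hr'))⟩

theorem WeaklySimulated.lang_subset (h : WeaklySimulated Obs S S') :
    S.lang Obs ⊆ S'.lang Obs := by
  obtain ⟨R, hR⟩ := h
  rintro w ⟨r, hw⟩
  exact hR.exists_weakSteps hR.1 hw

theorem WeaklyBisimilar.lang_eq (h : WeaklyBisimilar Obs S S') : S.lang Obs = S'.lang Obs := by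
  obtain ⟨R, hR, hR'⟩ := h
  exact (WeaklySimulated.lang_subset ⟨R, hR⟩).antisymm (WeaklySimulated.lang_subset ⟨_, hR'⟩)

end WeakSimulation

namespace PTNet

variable {P Tr : Type*} {N : PTNet P Tr} {L : Finset Tr}

theorem restrict_transitions_subset [DecidableEq Tr] {H : Finset Tr}
    (hT : N.transitions ⊆ L ∪ H) : (N.restrict H).transitions ⊆ L :=
  sdiff_le_iff.mpr (hT.trans (Finset.union_comm L H).le)

theorem Fires.cons_mem_freeLang_iff [DecidableEq P] {M M' : P → ℕ} {t : Tr} {s : List Tr}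
    (hf : N.Fires M t M') : t :: s ∈ N.freeLang M ↔ s ∈ N.freeLang M' := by
  constructor
  · rintro ⟨Mf, M'', hf', hs⟩
    rw [hf'.2.trans hf.2.symm] at hs
    exact ⟨Mf, hs⟩
  · rintro ⟨Mf, hs⟩
    exact ⟨Mf, M', hf, hs⟩

theorem weakSteps_toLTS_iff [DecidableEq P] (hN : N.transitions ⊆ L) {M0 M M' : P → ℕ}
    {s : List Tr} : (N.toLTS M0).WeakSteps L M s M' ↔ N.FiresSeq M s M' := by
  constructor
  · intro h
    induction h with
    | nil => rfl
    | tau hτ htr _ _ => exact absurd (hN htr.1.1) hτ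
    | obs _ htr _ ih => exact ⟨_, htr, ih⟩
  · induction s generalizing M with
    | nil =>
      rintro rfl
      exact .nil _
    | cons t s ih =>
      rintro ⟨M'', hf, hs⟩
      exact .obs (hN hf.1.1) hf (ih hs)

theorem lang_toLTS [DecidableEq P] (hN : N.transitions ⊆ L) (M : P → ℕ) :
    (N.toLTS M).lang L = N.freeLang M :=
  Set.ext fun _ => exists_congr fun _ => weakSteps_toLTS_iff hN

theorem exists_fires_freeLang_eq [DecidableEq P] {M1 M1' M2 : P → ℕ} {t : Tr}
    (hM : N.freeLang M1 = N.freeLang M1') (hf : N.Fires M1 t M2) :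
    ∃ M2', N.Fires M1' t M2' ∧ N.freeLang M2 = N.freeLang M2' := by
  have ht : [t] ∈ N.freeLang M1' := hM ▸ hf.cons_mem_freeLang_iff.mpr ⟨M2, rfl⟩
  obtain ⟨-, M2', hf', -⟩ := ht
  refine ⟨M2', hf', Set.ext fun s => ?_⟩
  rw [← hf.cons_mem_freeLang_iff, hM, hf'.cons_mem_freeLang_iff]

theorem weaklyBisimilar_of_freeLang_eq [DecidableEq P] (hN : N.transitions ⊆ L)
    {M M' : P → ℕ} (hM : N.freeLang M = N.freeLang M') :
    WeaklyBisimilar L (N.toLTS M) (N.toLTS M') := by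
  refine ⟨fun q q' => N.freeLang q = N.freeLang q', ⟨hM, ?_⟩, hM, ?_⟩
  all_goals
    refine fun q q' hq => ⟨fun σ _ r hr => ?_, fun τ hτ r hr => absurd (hN hr.1.1) hτ⟩
  · obtain ⟨r', hr', hrr'⟩ := exists_fires_freeLang_eq hq hr
    exact ⟨q', r', r', .refl, hr', .refl, hrr'⟩
  · obtain ⟨r', hr', hrr'⟩ := exists_fires_freeLang_eq hq.symm hr
    exact ⟨q', r', r', .refl, hr', .refl, hrr'.symm⟩

theorem weaklyBisimilar_toLTS_iff [DecidableEq P] (hN : N.transitions ⊆ L) {M M' : P → ℕ} :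
    WeaklyBisimilar L (N.toLTS M) (N.toLTS M') ↔ N.freeLang M = N.freeLang M' := by
  refine ⟨fun h => ?_, weaklyBisimilar_of_freeLang_eq hN⟩
  rw [← lang_toLTS hN, ← lang_toLTS hN]
  exact h.lang_eq

end PTNet

theorem sbndc_iff_lang_eq_general
    {P Tr : Type _} [DecidableEq P] [DecidableEq Tr]
    (N : PTNet P Tr) (M0 : P → ℕ) (L H : Finset Tr)
    (hT : N.transitions = L ∪ H) :
    SBNDC N M0 L H ↔
      ∀ M1 h M2, N.Reachable M0 M1 → h ∈ H → N.Fires M1 h M2 →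
        (N.restrict H).freeLang M1 = (N.restrict H).freeLang M2 := by
  simp only [SBNDC, PTNet.weaklyBisimilar_toLTS_iff (PTNet.restrict_transitions_subset hT.le)]

/-- `N` has SBNDC iff for every reachable marking `M1` and every
`h ∈ H`, `M1[h⟩M2` entails `L(N\H, M1) = L(N\H, M2)`. -/
theorem sbndc_iff_lang_eq
    {P Tr : Type _} [DecidableEq P] [DecidableEq Tr]
    (N : PTNet P Tr) (M0 : P → ℕ) (L H : Finset Tr)
    (hT : N.transitions = L ∪ H) (hLH : Disjoint L H) :
    SBNDC N M0 L H ↔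
      ∀ M1 h M2, N.Reachable M0 M1 → h ∈ H → N.Fires M1 h M2 →
        (N.restrict H).freeLang M1 = (N.restrict H).freeLang M2 :=
  sbndc_iff_lang_eq_general N M0 L H hT
end
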